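/- arXiv:cs/0605050 — 2 statements merged into one kernel-verified Lean document; each statement's English description precedes it below -/
import Mathlib

section
/- Let G be a transitive nilpotent permutation group on a finite set Ω, p a prime dividing |G|, α ∈ Ω, and Δ a G-block containing α with |Δ| = p^l. Then for every prime q ≠ p dividing |G|, the q-Sylow subgroup of the setwise stabilizer G_Δ equals G_q ∩ G_α, where G_q is the q-Sylow subgroup of G and G_α the point stabilizer of α. In particular, G_Δ = (G_p ∩ G_Δ) × ∏_{q ≠ p} (G_q ∩ G_α). -/
open Pointwise

namespace GaloisBlocks

variable {Ω : Type*}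

/-- `G ≤ Sym(Ω)` is transitive on `Ω`. -/
def IsTransitive (G : Subgroup (Equiv.Perm Ω)) : Prop :=
  ∀ a b : Ω, ∃ g ∈ G, g a = b

/-- `Δ` is a `G`-block: every `G`-translate of `Δ` equals `Δ` or is disjoint from it. -/
def IsBlock (G : Subgroup (Equiv.Perm Ω)) (Δ : Set Ω) : Prop :=
  ∀ g ∈ G, g • Δ = Δ ∨ Disjoint (g • Δ) Δ

/-- The setwise stabilizer `G_Δ` of `Δ` in `G`. -/
def stab (G : Subgroup (Equiv.Perm Ω)) (Δ : Set Ω) : Subgroup (Equiv.Perm Ω) :=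
  G ⊓ MulAction.stabilizer (Equiv.Perm Ω) Δ

/-- The point stabilizer `G_α`. -/
def stabPt (G : Subgroup (Equiv.Perm Ω)) (α : Ω) : Subgroup (Equiv.Perm Ω) :=
  G ⊓ MulAction.stabilizer (Equiv.Perm Ω) α

/-- The `Δ`-block system of `S`: all `G`-translates of `Δ` contained in `S`. -/
def blockSystem (G : Subgroup (Equiv.Perm Ω)) (S Δ : Set Ω) : Set (Set Ω) :=
  {Υ | (∃ g ∈ G, Υ = g • Δ) ∧ Υ ⊆ S}

/-- `G(S/Δ)`: elements of `G_S` fixing setwise every block of the `Δ`-block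
system of `S`. -/
def blockKer (G : Subgroup (Equiv.Perm Ω)) (S Δ : Set Ω) : Subgroup (Equiv.Perm Ω) :=
  stab G S ⊓ ⨅ Υ ∈ blockSystem G S Δ, MulAction.stabilizer (Equiv.Perm Ω) Υ

/-- `G^Δ = G(Ω/Δ)`: the kernel of the action of `G` on the block system of `Δ`. -/
def fullKer (G : Subgroup (Equiv.Perm Ω)) (Δ : Set Ω) : Subgroup (Equiv.Perm Ω) :=
  blockKer G Set.univ Δ

/-- The orbit `α^N`. -/
def orbitOf (N : Subgroup (Equiv.Perm Ω)) (α : Ω) : Set Ω :=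
  {β | ∃ g ∈ N, g α = β}

/-- `G` is primitive: transitive with only trivial blocks. -/
def IsPrimitive (G : Subgroup (Equiv.Perm Ω)) : Prop :=
  IsTransitive G ∧ ∀ Δ : Set Ω, IsBlock G Δ → Δ.Subsingleton ∨ Δ = Set.univ

/-- `Δ` is a maximal `G`-subblock of `S`. -/
def IsMaximalSubblock (G : Subgroup (Equiv.Perm Ω)) (Δ S : Set Ω) : Prop :=
  IsBlock G Δ ∧ IsBlock G S ∧ Δ ⊂ S ∧
    ∀ Υ : Set Ω, IsBlock G Υ → ¬(Δ ⊂ Υ ∧ Υ ⊂ S)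

/-- `P` is a `p`-Sylow subgroup of `G`. -/
def IsSylowOf (p : ℕ) (P G : Subgroup (Equiv.Perm Ω)) : Prop :=
  P ≤ G ∧ IsPGroup p ↥P ∧
    ∀ Q : Subgroup (Equiv.Perm Ω), Q ≤ G → IsPGroup p ↥Q → P ≤ Q → Q = P

/-!
In a nilpotent group the Sylow `q`-subgroup `G_q` is normal, so it contains every `q`-subgroup
of `G`; hence `G_q ∩ H` is a Sylow `q`-subgroup of every `H ≤ G`. By transitivity `Δ` is the
`G_Δ`-orbit of `α`, so `G_α` has index `|Δ| = p^l` in `G_Δ`, and `G_α`, `G_Δ` have the same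
`q`-part of their orders. The Sylow subgroups `G_q ∩ G_α ≤ G_q ∩ G_Δ` therefore coincide.
-/

section Sylow

variable {q : ℕ} {S H : Subgroup (Equiv.Perm Ω)}

def IsSylowOf.toSylow (h : IsSylowOf q S H) : Sylow q H where
  toSubgroup := S.subgroupOf H
  isPGroup' := h.2.1.of_equiv (Subgroup.subgroupOfEquivOfLe h.1).symm
  is_maximal' {R} hR hle := by
    have hRS : R.map H.subtype = S := h.2.2 _ (Subgroup.map_subtype_le R)
      (hR.of_equiv (R.equivMapOfInjective _ H.subtype_injective))
      (by rw [← Subgroup.map_subgroupOf_eq_of_le h.1]; exact Subgroup.map_mono hle)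
    rw [← hRS, Subgroup.subgroupOf, Subgroup.comap_map_eq_self_of_injective H.subtype_injective]

lemma IsSylowOf.card_eq [Finite Ω] (hq : q.Prime) (h : IsSylowOf q S H) :
    Nat.card S = q ^ (Nat.card H).factorization q := by
  have : Fact q.Prime := ⟨hq⟩
  rw [← h.toSylow.card_eq_multiplicity]
  exact Nat.card_congr (Subgroup.subgroupOfEquivOfLe h.1).toEquiv.symm

lemma IsSylowOf.le_of_isPGroup [Finite Ω] (hq : q.Prime) (hnil : Group.IsNilpotent H)
    (hS : IsSylowOf q S H) {R : Subgroup (Equiv.Perm Ω)} (hRH : R ≤ H) (hR : IsPGroup q R) :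
    R ≤ S := by
  have : Fact q.Prime := ⟨hq⟩
  have hnil_iff := (Group.isNilpotent_of_finite_tfae (G := H)).out 0 3
  have hnormal : (hS.toSylow : Subgroup H).Normal := hnil_iff.mp hnil q ⟨hq⟩ hS.toSylow
  have := Sylow.unique_of_normal _ hnormal
  obtain ⟨T, hRT⟩ := (hR.of_equiv (Subgroup.subgroupOfEquivOfLe hRH).symm).exists_le_sylow
  rw [Subsingleton.elim T hS.toSylow] at hRT
  rw [← Subgroup.map_subgroupOf_eq_of_le hRH, ← Subgroup.map_subgroupOf_eq_of_le hS.1]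
  exact Subgroup.map_mono hRT

lemma IsSylowOf.inf_of_isNilpotent [Finite Ω] (hq : q.Prime) (hnil : Group.IsNilpotent H)
    (hS : IsSylowOf q S H) {K : Subgroup (Equiv.Perm Ω)} (hKH : K ≤ H) :
    IsSylowOf q (S ⊓ K) K :=
  ⟨inf_le_right, hS.2.1.to_le inf_le_left, fun _ hRK hR hle =>
    le_antisymm (le_inf (hS.le_of_isPGroup hq hnil (hRK.trans hKH) hR) hRK) hle⟩

lemma IsSylowOf.eq_of_le_of_card_eq_mul [Finite Ω] (hq : q.Prime) {A SA : Subgroup (Equiv.Perm Ω)}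
    (hA : IsSylowOf q SA A) (hS : IsSylowOf q S H) (hle : SA ≤ S) {n : ℕ}
    (hcard : Nat.card H = Nat.card A * n) (hn : ¬ q ∣ n) : SA = S := by
  have hn0 : n ≠ 0 := fun h => hn (h ▸ dvd_zero q)
  refine Subgroup.eq_of_le_of_card_ge hle (le_of_eq ?_)
  rw [hA.card_eq hq, hS.card_eq hq, hcard, Nat.factorization_mul Nat.card_pos.ne' hn0,
    Finsupp.add_apply, Nat.factorization_eq_zero_of_not_dvd hn, add_zero]

end Sylow

section Blocks

variable {G : Subgroup (Equiv.Perm Ω)} {Δ : Set Ω} {α : Ω}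

lemma IsBlock.smul_eq_of_mem (hΔ : IsBlock G Δ) {g : Equiv.Perm Ω} (hg : g ∈ G) (hα : α ∈ Δ)
    (hgα : g α ∈ Δ) : g • Δ = Δ :=
  (hΔ g hg).resolve_right fun h => Set.disjoint_left.mp h (Set.smul_mem_smul_set hα) hgα

lemma stabPt_le_stab (hΔ : IsBlock G Δ) (hα : α ∈ Δ) : stabPt G α ≤ stab G Δ :=
  fun g ⟨hg, (hgα : g • α = α)⟩ =>
    ⟨hg, hΔ.smul_eq_of_mem hg hα (by rwa [← Equiv.Perm.smul_def, hgα])⟩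

lemma orbit_stab_eq (hG : IsTransitive G) (hΔ : IsBlock G Δ) (hα : α ∈ Δ) :
    MulAction.orbit (stab G Δ) α = Δ := by
  ext β
  constructor
  · rintro ⟨g, rfl⟩
    have hgΔ : (g : Equiv.Perm Ω) • Δ = Δ := g.2.2
    exact hgΔ.subset (Set.smul_mem_smul_set hα)
  · intro hβ
    obtain ⟨g, hg, rfl⟩ := hG α β
    exact ⟨⟨g, hg, hΔ.smul_eq_of_mem hg hα hβ⟩, rfl⟩

lemma stabilizer_stab_eq_subgroupOf_stabPt :
    MulAction.stabilizer (stab G Δ) α = (stabPt G α).subgroupOf (stab G Δ) := by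
  ext g
  exact ⟨fun h => ⟨g.2.1, h⟩, fun h => h.2⟩

lemma card_stab_eq (hG : IsTransitive G) (hΔ : IsBlock G Δ) (hα : α ∈ Δ) :
    Nat.card (stab G Δ) = Nat.card (stabPt G α) * Δ.ncard := by
  nth_rw 2 [← orbit_stab_eq hG hΔ hα]
  rw [← MulAction.index_stabilizer,
    ← (MulAction.stabilizer (stab G Δ) α).card_mul_index, stabilizer_stab_eq_subgroupOf_stabPt,
    Nat.card_congr (Subgroup.subgroupOfEquivOfLe (stabPt_le_stab hΔ hα)).toEquiv]

end Blocks

theorem stmt7_general [Fintype Ω] (G : Subgroup (Equiv.Perm Ω)) (hG : IsTransitive G)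
    (hnil : Group.IsNilpotent ↥G) (p : ℕ) (hp : p.Prime)
    (α : Ω)
    (Δ : Set Ω) (hΔ : IsBlock G Δ) (hα : α ∈ Δ) (l : ℕ)
    (hcard : Δ.ncard = p ^ l)
    (q : ℕ) (hq : q.Prime) (hqp : q ≠ p)
    (Q : Subgroup (Equiv.Perm Ω)) (hQ : IsSylowOf q Q G) :
    Q ⊓ stab G Δ = Q ⊓ stabPt G α ∧
    IsSylowOf q (Q ⊓ stab G Δ) (stab G Δ) := by
  have hSylowΔ := hQ.inf_of_isNilpotent hq hnil (inf_le_left : stab G Δ ≤ G)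
  have hSylowα := hQ.inf_of_isNilpotent hq hnil (inf_le_left : stabPt G α ≤ G)
  have hq_not_dvd : ¬ q ∣ p ^ l := fun h =>
    hqp ((Nat.prime_dvd_prime_iff_eq hq hp).mp (hq.dvd_of_dvd_pow h))
  have hcardΔ : Nat.card (stab G Δ) = Nat.card (stabPt G α) * p ^ l := by
    rw [card_stab_eq hG hΔ hα, hcard]
  exact ⟨(hSylowα.eq_of_le_of_card_eq_mul hq hSylowΔ
    (inf_le_inf_left Q (stabPt_le_stab hΔ hα)) hcardΔ hq_not_dvd).symm, hSylowΔ⟩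

/-- For a block `Δ ∋ α` of `p`-power size, the `q`-Sylow subgroup of `G_Δ`
(`q ≠ p`) is `G_q ∩ G_Δ = G_q ∩ G_α`. -/
theorem stmt7 [Fintype Ω] (G P : Subgroup (Equiv.Perm Ω)) (hG : IsTransitive G)
    (hnil : Group.IsNilpotent ↥G) (p : ℕ) (hp : p.Prime)
    (hpG : p ∣ Nat.card ↥G) (hP : IsSylowOf p P G) (α : Ω)
    (Δ : Set Ω) (hΔ : IsBlock G Δ) (hα : α ∈ Δ) (l : ℕ)
    (hcard : Δ.ncard = p ^ l)
    (q : ℕ) (hq : q.Prime) (hqp : q ≠ p) (hqG : q ∣ Nat.card ↥G)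
    (Q : Subgroup (Equiv.Perm Ω)) (hQ : IsSylowOf q Q G) :
    Q ⊓ stab G Δ = Q ⊓ stabPt G α ∧
    IsSylowOf q (Q ⊓ stab G Δ) (stab G Δ) :=
  stmt7_general G hG hnil p hp α Δ hΔ hα l hcard q hq hqp Q hQ

end GaloisBlocks
end

section
/- Let Γ_d denote the class of finite groups G having a composition series in which every nonabelian composition factor embeds in S_d. Let G be a transitive permutation group on a finite set Ω with a maximal chain of G-blocks {α} = Δ_0 ⊂ ... ⊂ Δ_t = Ω. Then G ∈ Γ_d if and only if G_{Δ_{i+1}}/G(Δ_{i+1}/Δ_i) ∈ Γ_d for every 0 ≤ i < t. -/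
open Pointwise

namespace GaloisBlocks

variable {Ω : Type*}

/-- `G ∈ Γ_d`: every nonabelian simple section of `G` (equivalently every
nonabelian composition factor) embeds into `S_d`. -/
def InGammaD (d : ℕ) (G : Type*) [Group G] : Prop :=
  ∀ (H : Subgroup G) (K : Subgroup ↥H) [K.Normal],
    IsSimpleGroup (↥H ⧸ K) →
      (∀ a b : ↥H ⧸ K, Commute a b) ∨
        ∃ φ : (↥H ⧸ K) →* Equiv.Perm (Fin d), Function.Injective φ

section Helpers

variable {d : ℕ}


/-- The "OK" predicate: abelian or embeds in `S_d`. -/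
def OkD (d : ℕ) (S : Type*) [Group S] : Prop :=
  (∀ a b : S, Commute a b) ∨ ∃ φ : S →* Equiv.Perm (Fin d), Function.Injective φ

theorem okD_congr {S S' : Type*} [Group S] [Group S'] (e : S ≃* S') (h : OkD d S) : OkD d S' := by
  rcases h with h | ⟨φ, hφ⟩
  · left
    intro a b
    have h2 := h (e.symm a) (e.symm b)
    have h3 : e (e.symm a * e.symm b) = e (e.symm b * e.symm a) := by
      rw [h2]
    have h4 : a * b = b * a := by simpa [map_mul] using h3
    exact h4
  · exact Or.inr ⟨φ.comp e.symm.toMonoidHom, hφ.comp e.symm.injective⟩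

theorem simple_congr {S S' : Type*} [Group S] [Group S'] (e : S ≃* S')
    (h : IsSimpleGroup S) : IsSimpleGroup S' := by
  haveI : Nontrivial S' := e.symm.toEquiv.nontrivial
  exact IsSimpleGroup.isSimpleGroup_of_surjective e.toMonoidHom e.surjective

theorem inGammaD_of_injective {H G₀ : Type*} [Group H] [Group G₀] (f : H →* G₀)
    (hf : Function.Injective f) (hG : InGammaD d G₀) : InGammaD d H := by
  intro H' K hK hsimp
  let e : ↥H' ≃* ↥(H'.map f) := Subgroup.equivMapOfInjective H' f hf
  let K'' : Subgroup ↥(H'.map f) := K.map e.toMonoidHom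
  haveI hK'' : K''.Normal := Subgroup.Normal.map hK e.toMonoidHom e.surjective
  let q : ↥H' ⧸ K ≃* ↥(H'.map f) ⧸ K'' := QuotientGroup.congr K K'' e rfl
  have hs' : IsSimpleGroup (↥(H'.map f) ⧸ K'') := simple_congr q hsimp
  exact okD_congr q.symm (hG (H'.map f) K'' hs')

theorem inGammaD_of_surjective {G₀ Q : Type*} [Group G₀] [Group Q] (f : G₀ →* Q)
    (hf : Function.Surjective f) (hG : InGammaD d G₀) : InGammaD d Q := by
  intro H' K hK hsimp
  let g : ↥(H'.comap f) →* ↥H' := f.subgroupComap H'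
  have hg : Function.Surjective g := by
    rintro ⟨y, hy⟩
    obtain ⟨x, rfl⟩ := hf y
    exact ⟨⟨x, hy⟩, rfl⟩
  let c : ↥(H'.comap f) →* ↥H' ⧸ K := (QuotientGroup.mk' K).comp g
  have hc : Function.Surjective c := (QuotientGroup.mk'_surjective K).comp hg
  let q := QuotientGroup.quotientKerEquivOfSurjective c hc
  have hs' : IsSimpleGroup (↥(H'.comap f) ⧸ c.ker) := simple_congr q.symm hsimp
  exact okD_congr q (hG _ c.ker hs')

theorem okD_self {S : Type*} [Group S] (hS : InGammaD d S) (h : IsSimpleGroup S) : OkD d S := by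
  have e : ↥(⊤ : Subgroup S) ⧸ (⊥ : Subgroup ↥(⊤ : Subgroup S)) ≃* S :=
    (QuotientGroup.quotientBot (G := ↥(⊤ : Subgroup S))).trans Subgroup.topEquiv
  exact okD_congr e (hS ⊤ ⊥ (simple_congr e.symm h))

theorem inGammaD_extension {G₀ Q : Type*} [Group G₀] [Group Q] (f : G₀ →* Q)
    (hkr : InGammaD d ↥f.ker) (hQ : InGammaD d Q) : InGammaD d G₀ := by
  intro H K hK hsimp
  suffices h : InGammaD d (↥H ⧸ K) from okD_self h hsimp
  let g : ↥H →* Q := f.comp H.subtype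
  let M : Subgroup ↥H := g.ker
  let π := QuotientGroup.mk' K
  rcases (Subgroup.Normal.map (inferInstance : M.Normal) π
      (QuotientGroup.mk'_surjective K)).eq_bot_or_eq_top with hbot | htop
  · -- M ≤ K : quotient is a section of Q
    have hMK : M ≤ K := by
      intro x hx
      have h1 : π x ∈ M.map π := Subgroup.mem_map_of_mem π hx
      rw [hbot, Subgroup.mem_bot] at h1
      exact (QuotientGroup.eq_one_iff x).mp h1
    let s : ↥H ⧸ M →* ↥H ⧸ K := QuotientGroup.map M K (MonoidHom.id ↥H) (by simpa using hMK)
    have hs : Function.Surjective s := by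
      intro y
      obtain ⟨x, rfl⟩ := QuotientGroup.mk_surjective y
      exact ⟨QuotientGroup.mk x, rfl⟩
    have h1 : InGammaD d ↥f.range := inGammaD_of_injective f.range.subtype Subtype.val_injective hQ
    have hle : g.range ≤ f.range := by
      rintro - ⟨x, rfl⟩
      exact ⟨x.1, rfl⟩
    have h2 : InGammaD d ↥g.range :=
      inGammaD_of_injective (Subgroup.inclusion hle) (Subgroup.inclusion_injective hle) h1
    have h3 : InGammaD d (↥H ⧸ M) :=
      inGammaD_of_injective (QuotientGroup.quotientKerEquivRange g).toMonoidHom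
        (QuotientGroup.quotientKerEquivRange g).injective h2
    exact inGammaD_of_surjective s hs h3
  · -- M maps onto the quotient : quotient is a section of ker f
    let c : ↥M →* ↥H ⧸ K := π.comp M.subtype
    have hc : Function.Surjective c := by
      rw [← MonoidHom.range_eq_top, MonoidHom.range_comp, Subgroup.range_subtype]
      exact htop
    have hmem : ∀ y : ↥M, ((y : ↥H) : G₀) ∈ f.ker := fun y => by
      have := y.2
      rw [MonoidHom.mem_ker] at this ⊢
      exact this
    let ι : ↥M →* ↥f.ker := MonoidHom.mk' (fun y => ⟨((y : ↥H) : G₀), hmem y⟩) (fun a b => rfl)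
    have hι : Function.Injective ι := by
      intro a b hab
      have h2 := congrArg Subtype.val hab
      exact Subtype.ext (Subtype.ext h2)
    exact inGammaD_of_surjective c hc (inGammaD_of_injective ι hι hkr)

theorem inGammaD_subsingleton {S : Type*} [Group S] [Subsingleton S] : InGammaD d S := by
  intro H K _ hs
  rcases hs.toNontrivial.exists_pair_ne with ⟨a, b, hab⟩
  obtain ⟨x, rfl⟩ := QuotientGroup.mk_surjective a
  obtain ⟨y, rfl⟩ := QuotientGroup.mk_surjective b
  exact absurd (congrArg _ (Subtype.ext (Subsingleton.elim (x : S) (y : S)))) hab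

theorem inGammaD_prod {A B : Type*} [Group A] [Group B] (hA : InGammaD d A) (hB : InGammaD d B) :
    InGammaD d (A × B) := by
  apply inGammaD_extension (MonoidHom.fst A B) ?_ hA
  refine inGammaD_of_injective ((MonoidHom.snd A B).comp (MonoidHom.fst A B).ker.subtype) ?_ hB
  intro x y hxy
  apply Subtype.ext
  apply Prod.ext
  · rw [show x.1.1 = 1 from MonoidHom.mem_ker.mp x.2, show y.1.1 = 1 from MonoidHom.mem_ker.mp y.2]
  · exact hxy

theorem inGammaD_pi {I : Type*} [Finite I] (Q : Type*) [Group Q] (hQ : InGammaD d Q) :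
    InGammaD d (I → Q) := by
  refine Finite.induction_empty_option (P := fun α => InGammaD d (α → Q)) ?_ ?_ ?_ I
  · intro α β e h
    let E : (α → Q) ≃* (β → Q) :=
      { Equiv.arrowCongr e (Equiv.refl Q) with map_mul' := fun f g => rfl }
    exact inGammaD_of_injective E.symm.toMonoidHom E.symm.injective h
  · haveI : Subsingleton (PEmpty → Q) := ⟨fun a b => funext fun x => x.elim⟩
    exact inGammaD_subsingleton
  · intro α _ h
    let E : (Option α → Q) ≃* (Q × (α → Q)) :=
      { Equiv.piOptionEquivProd (β := fun _ => Q) with map_mul' := fun f g => rfl }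
    exact inGammaD_of_injective E.toMonoidHom E.injective (inGammaD_prod hQ h)


section Perm

variable {Ω : Type*}

theorem mem_stab_iff {G : Subgroup (Equiv.Perm Ω)} {S : Set Ω} {x : Equiv.Perm Ω} :
    x ∈ stab G S ↔ x ∈ G ∧ x • S = S := by
  rw [stab, Subgroup.mem_inf, MulAction.mem_stabilizer_iff]

theorem mem_blockKer_iff {G : Subgroup (Equiv.Perm Ω)} {S Δ' : Set Ω} {x : Equiv.Perm Ω} :
    x ∈ blockKer G S Δ' ↔ (x ∈ G ∧ x • S = S) ∧
      ∀ Υ : Set Ω, (∃ g ∈ G, Υ = g • Δ') → Υ ⊆ S → x • Υ = Υ := by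
  rw [blockKer, Subgroup.mem_inf, mem_stab_iff]
  constructor
  · rintro ⟨h1, h2⟩
    refine ⟨h1, fun Υ hΥ hΥS => ?_⟩
    exact Subgroup.mem_iInf.mp (Subgroup.mem_iInf.mp h2 Υ) ⟨hΥ, hΥS⟩
  · rintro ⟨h1, h2⟩
    refine ⟨h1, ?_⟩
    rw [Subgroup.mem_iInf]
    intro Υ
    rw [Subgroup.mem_iInf]
    rintro ⟨hΥ, hΥS⟩
    exact h2 Υ hΥ hΥS

theorem mem_fullKer_iff {G : Subgroup (Equiv.Perm Ω)} {Δ' : Set Ω} {x : Equiv.Perm Ω} :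
    x ∈ fullKer G Δ' ↔ x ∈ G ∧ ∀ g ∈ G, x • (g • Δ') = g • Δ' := by
  rw [fullKer, mem_blockKer_iff]
  constructor
  · rintro ⟨⟨h1, -⟩, h2⟩
    exact ⟨h1, fun g hg => h2 (g • Δ') ⟨g, hg, rfl⟩ (Set.subset_univ _)⟩
  · rintro ⟨h1, h2⟩
    refine ⟨⟨h1, Set.smul_set_univ⟩, ?_⟩
    rintro Υ ⟨g, hg, rfl⟩ -
    exact h2 g hg

theorem translates_eq_or_disjoint {G : Subgroup (Equiv.Perm Ω)} {Δ' : Set Ω}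
    (hB : IsBlock G Δ') {g h : Equiv.Perm Ω} (hg : g ∈ G) (hh : h ∈ G) :
    g • Δ' = h • Δ' ∨ Disjoint (g • Δ') (h • Δ') := by
  rcases hB (h⁻¹ * g) (mul_mem (inv_mem hh) hg) with he | hd
  · left
    calc g • Δ' = h • (h⁻¹ * g) • Δ' := by rw [smul_smul, mul_inv_cancel_left]
      _ = h • Δ' := by rw [he]
  · right
    rw [Set.disjoint_left]
    intro a hag hah
    have h1 : h⁻¹ • a ∈ (h⁻¹ * g) • Δ' := by
      rw [mul_smul]
      exact Set.smul_mem_smul_set hag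
    have h2 : h⁻¹ • a ∈ Δ' := Set.mem_smul_set_iff_inv_smul_mem.mp hah
    exact Set.disjoint_left.mp hd h1 h2

end Perm

/-- Given a maximal chain of `G`-blocks, `G ∈ Γ_d` iff each
`G_{Δ_{i+1}}/G(Δ_{i+1}/Δ_i)` is in `Γ_d`. -/
theorem stmt17 [Fintype Ω] (d : ℕ) (G : Subgroup (Equiv.Perm Ω))
    (hG : IsTransitive G) (α : Ω) (t : ℕ) (Δ : Fin (t + 1) → Set Ω)
    (h0 : Δ 0 = {α}) (hlast : Δ (Fin.last t) = Set.univ)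
    (hchain : ∀ i : Fin t, IsMaximalSubblock G (Δ i.castSucc) (Δ i.succ))
    (hker : ∀ i : Fin t,
      ((blockKer G (Δ i.succ) (Δ i.castSucc)).subgroupOf (stab G (Δ i.succ))).Normal) :
    InGammaD d ↥G ↔ ∀ i : Fin t,
      letI := hker i
      InGammaD d
        (↥(stab G (Δ i.succ)) ⧸
          (blockKer G (Δ i.succ) (Δ i.castSucc)).subgroupOf (stab G (Δ i.succ))) := by
  constructor
  · -- forward: quotients of subgroups of G stay in Γ_d
    intro hGd i
    letI := hker i
    have hle : stab G (Δ i.succ) ≤ G := inf_le_left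
    exact inGammaD_of_surjective (QuotientGroup.mk' _) (QuotientGroup.mk'_surjective _)
      (inGammaD_of_injective (Subgroup.inclusion hle) (Subgroup.inclusion_injective hle) hGd)
  · -- backward: climb the normal series fullKer G (Δ i)
    intro h
    have habove : ∀ j : Fin (t + 1), α ∈ Δ j := by
      intro j
      induction j using Fin.induction with
      | zero => rw [h0]; exact Set.mem_singleton _
      | succ i ih => exact (hchain i).2.2.1.subset ih
    have key : ∀ i : Fin (t + 1), InGammaD d ↥(fullKer G (Δ i)) := by
      intro i
      induction i using Fin.induction with
      | zero =>
        have h1 : ∀ x ∈ fullKer G (Δ 0), x = 1 := by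
          intro x hx
          rcases mem_fullKer_iff.mp hx with ⟨-, hfix⟩
          ext β
          obtain ⟨g, hg, hgβ⟩ := hG α β
          have h2 := hfix g hg
          rw [h0, Set.smul_set_singleton, Set.smul_set_singleton,
            Set.singleton_eq_singleton_iff] at h2
          simpa [Equiv.Perm.smul_def, hgβ] using h2
        haveI : Subsingleton ↥(fullKer G (Δ 0)) :=
          ⟨fun a b => Subtype.ext (by rw [h1 a a.2, h1 b b.2])⟩
        exact inGammaD_subsingleton
      | succ i ih =>
        letI := hker i
        have hsub : Δ i.castSucc ⊆ Δ i.succ := (hchain i).2.2.1.subset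
        have hcover : ∀ γ : Ω, ∀ g ∈ G, γ ∈ g • Δ i.succ →
            ∃ k ∈ G, γ ∈ k • Δ i.castSucc ∧ k • Δ i.castSucc ⊆ g • Δ i.succ := by
          intro γ g hg hγ
          obtain ⟨k, hk, hkα⟩ := hG α γ
          have hγk : γ ∈ k • Δ i.castSucc := ⟨α, habove i.castSucc, hkα⟩
          have hγk' : γ ∈ k • Δ i.succ := ⟨α, habove i.succ, hkα⟩
          rcases translates_eq_or_disjoint (hchain i).2.1 hk hg with he | hd
          · refine ⟨k, hk, hγk, ?_⟩
            rw [← he]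
            exact Set.smul_set_mono hsub
          · exact absurd hγ (Set.disjoint_left.mp hd hγk')
        have hmono : fullKer G (Δ i.castSucc) ≤ fullKer G (Δ i.succ) := by
          have hss : ∀ x ∈ fullKer G (Δ i.castSucc), ∀ g ∈ G,
              x • (g • Δ i.succ) ⊆ g • Δ i.succ := by
            intro x hx g hg β hβ
            rw [Set.mem_smul_set] at hβ
            obtain ⟨γ, hγ, rfl⟩ := hβ
            obtain ⟨k, hk, hγk, hkss⟩ := hcover γ g hg hγ
            have h5 := (mem_fullKer_iff.mp hx).2 k hk
            have hxγ : x • γ ∈ k • Δ i.castSucc := by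
              rw [← h5]
              exact Set.smul_mem_smul_set hγk
            exact hkss hxγ
          intro x hx
          rw [mem_fullKer_iff]
          refine ⟨(mem_fullKer_iff.mp hx).1, fun g hg => ?_⟩
          apply subset_antisymm (hss x hx g hg)
          intro β hβ
          exact Set.mem_smul_set_iff_inv_smul_mem.mpr ((hss x⁻¹ (inv_mem hx) g hg)
            (Set.smul_mem_smul_set hβ))
        have hconj : ∀ x : Equiv.Perm Ω, x ∈ fullKer G (Δ i.succ) → ∀ g ∈ G,
            g⁻¹ * x * g ∈ stab G (Δ i.succ) := by
          intro x hx g hg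
          rcases mem_fullKer_iff.mp hx with ⟨hxG, hfix⟩
          rw [mem_stab_iff]
          refine ⟨mul_mem (mul_mem (inv_mem hg) hxG) hg, ?_⟩
          calc (g⁻¹ * x * g) • Δ i.succ = g⁻¹ • x • g • Δ i.succ := by
                rw [mul_smul, mul_smul]
            _ = g⁻¹ • g • Δ i.succ := by rw [hfix g hg]
            _ = Δ i.succ := inv_smul_smul g _
        let Qi := ↥(stab G (Δ i.succ)) ⧸
          (blockKer G (Δ i.succ) (Δ i.castSucc)).subgroupOf (stab G (Δ i.succ))
        let Φ : ↥(fullKer G (Δ i.succ)) →* (↥G → Qi) :=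
          MonoidHom.mk' (fun x g => QuotientGroup.mk
              (⟨(g : Equiv.Perm Ω)⁻¹ * x * g, hconj x x.2 g g.2⟩ : ↥(stab G (Δ i.succ))))
            (by
              intro x y
              funext g
              show (QuotientGroup.mk _ : Qi) = (QuotientGroup.mk _ : Qi) * (QuotientGroup.mk _ : Qi)
              rw [← QuotientGroup.mk_mul]
              congr 1
              apply Subtype.ext
              show (g : Equiv.Perm Ω)⁻¹ * ((x : Equiv.Perm Ω) * y) * g
                = ((g : Equiv.Perm Ω)⁻¹ * x * g) * ((g : Equiv.Perm Ω)⁻¹ * y * g)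
              group)
        apply inGammaD_extension Φ ?_ ?_
        · -- kernel embeds into fullKer G (Δ i.castSucc)
          have hmem : ∀ y : ↥Φ.ker, (((y : ↥(fullKer G (Δ i.succ))) : Equiv.Perm Ω)) ∈
              fullKer G (Δ i.castSucc) := by
            rintro ⟨⟨x, hxNs⟩, hy⟩
            rcases mem_fullKer_iff.mp hxNs with ⟨hxG, -⟩
            rw [mem_fullKer_iff]
            refine ⟨hxG, fun g hg => ?_⟩
            have h2 := congrFun (MonoidHom.mem_ker.mp hy) (⟨g, hg⟩ : ↥G)
            rw [show Φ ⟨x, hxNs⟩ (⟨g, hg⟩ : ↥G) = QuotientGroup.mk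
              (⟨g⁻¹ * x * g, hconj x hxNs g hg⟩ : ↥(stab G (Δ i.succ))) from rfl] at h2
            rw [show (1 : ↥G → Qi) (⟨g, hg⟩ : ↥G) = 1 from rfl] at h2
            rw [QuotientGroup.eq_one_iff, Subgroup.mem_subgroupOf] at h2
            rcases mem_blockKer_iff.mp h2 with ⟨-, hfix⟩
            have h3 := hfix (Δ i.castSucc) ⟨1, one_mem G, (one_smul _ _).symm⟩ hsub
            show x • g • Δ i.castSucc = g • Δ i.castSucc
            rw [smul_smul, show x * g = g * (g⁻¹ * x * g) by group, ← smul_smul, h3]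
          have hlek : Φ.ker ≤ (fullKer G (Δ i.castSucc)).subgroupOf (fullKer G (Δ i.succ)) :=
            fun y hy => Subgroup.mem_subgroupOf.mpr (hmem ⟨y, hy⟩)
          exact inGammaD_of_injective
            (((Subgroup.subgroupOfEquivOfLe hmono).toMonoidHom).comp (Subgroup.inclusion hlek))
            ((Subgroup.subgroupOfEquivOfLe hmono).injective.comp
              (Subgroup.inclusion_injective hlek)) ih
        · exact inGammaD_pi Qi (h i)
    have hGN : G ≤ fullKer G (Δ (Fin.last t)) := by
      intro x hx
      rw [mem_fullKer_iff, hlast]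
      exact ⟨hx, fun g hg => by rw [Set.smul_set_univ, Set.smul_set_univ]⟩
    exact inGammaD_of_injective (Subgroup.inclusion hGN)
      (Subgroup.inclusion_injective hGN) (key (Fin.last t))


end Helpers

end GaloisBlocks
end
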